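/- (Presentation of the first blow-up chart, from the proof of Proposition 4.2 of the paper.) Let k be an algebraically closed field and r, a integers with 1 ≤ a ≤ r. Let K be the field of fractions of the domain C_r, and let ε₁ : P[Y] → K be the P-algebra homomorphism extending the composite P → C_r → K and sending Y to x₃^a / x₁ (note x₁ ≠ 0 in the domain C_r). Then the kernel of ε₁ is exactly the ideal of P[Y] generated by X₁·Y − X₃^a and X₃^(r−a)·Y − X₂. Consequently the C_r-subalgebra of K generated by x₃^a/x₁ is isomorphic to A₁(a) = k⟦X₁,X₂,X₃⟧[Y] ⧸ (X₁·Y − X₃^a, X₃^(r−a)·Y − X₂). -/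

import Mathlib

open Polynomial MvPowerSeries

/-- The relation `X₁·X₂ − X₃^r` in the formal power series ring `k⟦X₁,X₂,X₃⟧`
(variables indexed by `0, 1, 2`). -/
noncomputable def nodalRelation (k : Type) [Field k] (r : ℕ) :
    Ideal (MvPowerSeries (Fin 3) k) :=
  Ideal.span {MvPowerSeries.X 0 * MvPowerSeries.X 1 - MvPowerSeries.X 2 ^ r}

/-- The local ring `C_r = k⟦X₁,X₂,X₃⟧ ⧸ (X₁·X₂ − X₃^r)` of the A-type surface singularity. -/
abbrev Cring (k : Type) [Field k] (r : ℕ) : Type :=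
  MvPowerSeries (Fin 3) k ⧸ nodalRelation k r

/-- `x₁`, the image of `X₁` in `C_r`. -/
noncomputable def xone (k : Type) [Field k] (r : ℕ) : Cring k r :=
  Ideal.Quotient.mk (nodalRelation k r) (MvPowerSeries.X 0)

/-- `x₃`, the image of `X₃` in `C_r`. -/
noncomputable def xthree (k : Type) [Field k] (r : ℕ) : Cring k r :=
  Ideal.Quotient.mk (nodalRelation k r) (MvPowerSeries.X 2)

/-- The ideal of `P[Y]` defining the first blow-up chart
`A₁(a) = P[Y] ⧸ (X₁·Y − X₃^a, X₃^(r−a)·Y − X₂)`. -/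
noncomputable def chartOneRelation (k : Type) [Field k] (r a : ℕ) :
    Ideal (Polynomial (MvPowerSeries (Fin 3) k)) :=
  Ideal.span
    {Polynomial.C (MvPowerSeries.X 0) * Polynomial.X - Polynomial.C (MvPowerSeries.X 2 ^ a),
     Polynomial.C (MvPowerSeries.X 2 ^ (r - a)) * Polynomial.X - Polynomial.C (MvPowerSeries.X 1)}

/-- The first blow-up chart `A₁(a)` of the blow-up of `Spec C_r` along `(x₁, x₃^a)`. -/
abbrev chartOne (k : Type) [Field k] (r a : ℕ) : Type :=
  Polynomial (MvPowerSeries (Fin 3) k) ⧸ chartOneRelation k r a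


/-!
Write `G₁ = X₁Y − X₃^a`, `G₂ = X₃^(r−a)Y − X₂` and `I = (G₁, G₂)`. Both generators vanish at
`Y = x₃^a/x₁`, and `X₃^(r−a)G₁ − X₁G₂ = X₁X₂ − X₃^r` lies in `I`. Conversely, pseudo-division by
`G₁` gives `X₁^n f ≡ c (mod G₁)` with `c ∈ P`; if `ε₁ f = 0` then `c ∈ (X₁X₂ − X₃^r) ⊆ I`, so
`X₁^n f ∈ I`, and it remains to see that `X₁` is a nonzerodivisor modulo `I`. Reducing a relation
`A·G₁ + B·G₂ = X₁f` modulo `X₁` gives `X₃^a Ā = Ḡ₂ B̄` over `k⟦X₂,X₃⟧`; as `X₃` is prime there and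
does not divide `Ḡ₂` (whose constant term is `−X₂`), `Ā = Ḡ₂Q` and `B̄ = X₃^a Q`, and lifting `Q`
writes `f` as a combination of `G₁` and `G₂`. Finally the subalgebra generated by `x₃^a/x₁` is the
image of `ε₁`, hence isomorphic to `P[Y] ⧸ ker ε₁ = A₁(a)`.
-/

namespace MvPowerSeries

variable {σ τ R : Type*} [CommRing R]

instance [IsDomain R] : IsDomain (MvPowerSeries σ R) := NoZeroDivisors.to_isDomain _

theorem X_ne_zero [Nontrivial R] (j : σ) : (X j : MvPowerSeries σ R) ≠ 0 := by
  classical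
  intro h
  simpa [coeff_X] using congrArg (coeff (Finsupp.single j 1)) h

theorem X_not_dvd_X [Nontrivial R] {i j : σ} (h : i ≠ j) :
    ¬ (X i : MvPowerSeries σ R) ∣ X j := by
  classical
  rw [X_dvd_iff]
  push Not
  exact ⟨Finsupp.single j 1, by simp [h], by simp [coeff_X]⟩

theorem killCompl_surjective (e : σ ↪ τ) : Function.Surjective (killCompl (R := R) e) :=
  Function.LeftInverse.surjective killCompl_rename_app

theorem ker_killCompl_subtype_ne (j : σ) :
    RingHom.ker (killCompl (R := R) (Function.Embedding.subtype (· ≠ j))) = Ideal.span {X j} := by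
  refine le_antisymm (fun f hf => ?_) ?_
  · rw [Ideal.mem_span_singleton, X_dvd_iff]
    intro m hm
    obtain ⟨m', rfl⟩ :
        m ∈ Set.range (Finsupp.embDomain (Function.Embedding.subtype (· ≠ j))) := by
      rw [Finsupp.mem_range_embDomain_iff]
      intro i hi
      exact ⟨⟨i, fun h => (h ▸ Finsupp.mem_support_iff.mp hi) hm⟩, rfl⟩
    rw [← coeff_killCompl, RingHom.mem_ker.mp hf, map_zero]
  · rw [Ideal.span_le, Set.singleton_subset_iff]
    exact killCompl_X_eq_zero (by simp)

theorem prime_X [IsDomain R] (j : σ) : Prime (X j : MvPowerSeries σ R) := by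
  rw [← Ideal.span_singleton_prime (X_ne_zero j), ← ker_killCompl_subtype_ne]
  exact RingHom.ker_isPrime _

end MvPowerSeries

theorem dvd_of_dvd_pow_mul_of_not_dvd {M : Type*} [CommMonoidWithZero M] [IsCancelMulZero M]
    {p g : M} (hp : Prime p) (hpg : ¬ p ∣ g) (n : ℕ) {u : M} (h : g ∣ p ^ n * u) : g ∣ u := by
  induction n generalizing u with
  | zero => simpa using h
  | succ n ih =>
    obtain ⟨v, hv⟩ := ih (u := p * u) (by rwa [← mul_assoc, ← pow_succ])
    obtain ⟨w, rfl⟩ := (hp.dvd_or_dvd ⟨u, hv.symm⟩).resolve_left hpg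
    exact ⟨w, mul_left_cancel₀ hp.ne_zero (by rw [hv, mul_left_comm])⟩

namespace Polynomial

variable {R S : Type*} [CommRing R] [CommRing S]

theorem exists_C_pow_mul_eq_mul_add_C (x w : R) (f : R[X]) :
    ∃ (n : ℕ) (q : R[X]) (c : R), C x ^ n * f = q * (C x * X - C w) + C c := by
  induction f using Polynomial.induction_on with
  | C c => exact ⟨0, 0, c, by simp⟩
  | add f g hf hg =>
    obtain ⟨m, p, c, hp⟩ := hf
    obtain ⟨n, q, d, hq⟩ := hg
    refine ⟨m + n, C x ^ n * p + C x ^ m * q, x ^ n * c + x ^ m * d, ?_⟩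
    simp only [map_add, map_mul, map_pow]
    linear_combination C x ^ n * hp + C x ^ m * hq
  | monomial _ c h =>
    obtain ⟨n, q, d, hq⟩ := h
    refine ⟨n + 1, C x * X * q + C d, d * w, ?_⟩
    simp only [map_mul]
    linear_combination C x * X * hq

theorem C_dvd_of_map_eq_zero {π : R →+* S} {x : R}
    (hπ : RingHom.ker π = Ideal.span {x}) {p : R[X]} (hp : p.map π = 0) : C x ∣ p := by
  rw [← Ideal.mem_span_singleton, ← Set.image_singleton, ← Ideal.map_span, ← hπ,
    ← ker_mapRingHom]
  exact hp

noncomputable def chartIdeal (x y z : R) (a b : ℕ) : Ideal R[X] :=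
  Ideal.span {C x * X - C (z ^ a), C (z ^ b) * X - C y}

variable {x y z : R} {a b : ℕ}

theorem C_mul_X_sub_mem_chartIdeal : C x * X - C (z ^ a) ∈ chartIdeal x y z a b :=
  Ideal.subset_span (Set.mem_insert _ _)

theorem C_pow_mul_X_sub_mem_chartIdeal : C (z ^ b) * X - C y ∈ chartIdeal x y z a b :=
  Ideal.subset_span (Set.mem_insert_of_mem _ rfl)

theorem C_mul_sub_pow_mem_chartIdeal : C (x * y - z ^ (a + b)) ∈ chartIdeal x y z a b := by
  have h : C (x * y - z ^ (a + b)) =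
      C (z ^ b) * (C x * X - C (z ^ a)) - C x * (C (z ^ b) * X - C y) := by
    simp only [map_sub, map_mul, map_pow, pow_add]
    ring
  rw [h]
  exact sub_mem (Ideal.mul_mem_left _ _ C_mul_X_sub_mem_chartIdeal)
    (Ideal.mul_mem_left _ _ C_pow_mul_X_sub_mem_chartIdeal)

theorem exists_eq_mul_of_C_pow_mul_eq [IsDomain S] {y z : S} (hz : Prime z) (hzy : ¬ z ∣ y)
    {A B : S[X]} (h : C z ^ a * A = (C (z ^ b) * X - C y) * B) :
    ∃ Q, A = (C (z ^ b) * X - C y) * Q ∧ B = C z ^ a * Q := by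
  have hzg : ¬ C z ∣ C (z ^ b) * X - C y := by
    rw [C_dvd_iff_dvd_coeff]
    push Not
    exact ⟨0, by simpa using hzy⟩
  obtain ⟨Q, hQ⟩ := dvd_of_dvd_pow_mul_of_not_dvd (prime_C_iff.mpr hz) hzg a ⟨B, h⟩
  have hg : C (z ^ b) * X - C y ≠ 0 := fun h0 => hzg (h0 ▸ dvd_zero _)
  refine ⟨Q, hQ, mul_left_cancel₀ hg ?_⟩
  rw [← h, hQ]
  ring

variable [IsDomain R] [IsDomain S] {π : R →+* S} (hπ : Function.Surjective π)
  (hker : RingHom.ker π = Ideal.span {x}) (hz : Prime (π z)) (hzy : ¬ π z ∣ π y)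
include hπ hker hz hzy

theorem mem_chartIdeal_of_C_mul_mem (hx : x ≠ 0) {f : R[X]}
    (hf : C x * f ∈ chartIdeal x y z a b) : f ∈ chartIdeal x y z a b := by
  obtain ⟨A, B, hAB⟩ := Ideal.mem_span_pair.mp hf
  have hπx : π x = 0 := by
    rw [← RingHom.mem_ker, hker]
    exact Ideal.mem_span_singleton_self x
  have hmod : C (π z) ^ a * A.map π = (C (π z ^ b) * X - C (π y)) * B.map π := by
    have h := congrArg (map π) hAB
    simp only [Polynomial.map_add, Polynomial.map_mul, Polynomial.map_sub, map_C, map_X,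
      Polynomial.map_pow, map_pow, hπx, C_0, zero_mul, zero_sub] at h
    rw [C_pow]
    linear_combination -h
  obtain ⟨Q, hA, hB⟩ := exists_eq_mul_of_C_pow_mul_eq hz hzy hmod
  obtain ⟨Q, rfl⟩ := map_surjective π hπ Q
  obtain ⟨A', hA'⟩ := C_dvd_of_map_eq_zero hker (p := A - (C (z ^ b) * X - C y) * Q)
    (by simp [hA])
  obtain ⟨B', hB'⟩ := C_dvd_of_map_eq_zero hker (p := B - C z ^ a * Q) (by simp [hB])
  refine Ideal.mem_span_pair.mpr ⟨A', B' + Q * X, mul_left_cancel₀ (C_ne_zero.mpr hx) ?_⟩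
  simp only [C_pow] at hAB hA' hB' ⊢
  linear_combination hAB - (C x * X - C z ^ a) * hA' - (C z ^ b * X - C y) * hB'

theorem mem_chartIdeal_of_C_pow_mul_mem (hx : x ≠ 0) (n : ℕ) {f : R[X]}
    (hf : C x ^ n * f ∈ chartIdeal x y z a b) : f ∈ chartIdeal x y z a b := by
  induction n generalizing f with
  | zero => simpa using hf
  | succ n ih =>
    exact mem_chartIdeal_of_C_mul_mem hπ hker hz hzy hx (ih (by rwa [← mul_assoc, ← pow_succ]))

theorem ker_eval₂RingHom_eq_chartIdeal {K : Type*} [CommRing K] [IsDomain K] {φ : R →+* K}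
    (hφ : RingHom.ker φ = Ideal.span {x * y - z ^ (a + b)}) (hφx : φ x ≠ 0) {t : K}
    (ht : φ x * t = φ z ^ a) : RingHom.ker (eval₂RingHom φ t) = chartIdeal x y z a b := by
  have hrel : φ x * φ y = φ z ^ (a + b) := by
    rw [← map_mul, ← map_pow, ← sub_eq_zero, ← map_sub, ← RingHom.mem_ker, hφ]
    exact Ideal.mem_span_singleton_self _
  refine le_antisymm (fun f hf => ?_) ?_
  · obtain ⟨n, q, c, hqc⟩ := exists_C_pow_mul_eq_mul_add_C x (z ^ a) f
    have hc : c ∈ RingHom.ker φ := by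
      have h := congrArg (eval₂ φ t) hqc
      have hf' : eval₂ φ t f = 0 := hf
      simp only [eval₂_mul, eval₂_add, eval₂_sub, eval₂_pow, eval₂_C, eval₂_X, hf',
        mul_zero] at h
      rw [map_pow, ← ht, sub_self, mul_zero, zero_add] at h
      exact h.symm
    rw [hφ, Ideal.mem_span_singleton'] at hc
    obtain ⟨d, rfl⟩ := hc
    refine mem_chartIdeal_of_C_pow_mul_mem hπ hker hz hzy (ne_of_apply_ne φ (by simpa)) n ?_
    rw [hqc, map_mul]
    exact add_mem (Ideal.mul_mem_left _ _ C_mul_X_sub_mem_chartIdeal)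
      (Ideal.mul_mem_left _ _ C_mul_sub_pow_mem_chartIdeal)
  · rw [chartIdeal, Ideal.span_le]
    rintro g (rfl | rfl)
    · show eval₂ φ t _ = 0
      rw [eval₂_sub, eval₂_mul, eval₂_C, eval₂_X, eval₂_C, ht, map_pow, sub_self]
    · show eval₂ φ t _ = 0
      refine mul_left_cancel₀ hφx ?_
      rw [eval₂_sub, eval₂_mul, eval₂_C, eval₂_X, eval₂_C, map_pow, mul_zero]
      linear_combination φ z ^ b * ht - hrel

end Polynomial

theorem Algebra.adjoin_singleton_toSubring_eq_range_eval₂RingHom {R A B : Type*} [CommRing R]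
    [CommRing A] [CommRing B] [Algebra A B] {g : R →+* A} (hg : Function.Surjective g) (t : B) :
    (Algebra.adjoin A {t}).toSubring = (eval₂RingHom ((algebraMap A B).comp g) t).range := by
  ext s
  simp only [Subalgebra.mem_toSubring, Algebra.adjoin_singleton_eq_range_aeval,
    AlgHom.mem_range, RingHom.mem_range, coe_eval₂RingHom]
  constructor
  · rintro ⟨p, rfl⟩
    obtain ⟨q, rfl⟩ := map_surjective g hg p
    exact ⟨q, by rw [aeval_def, eval₂_map]⟩
  · rintro ⟨q, rfl⟩
    exact ⟨q.map g, by rw [aeval_def, eval₂_map]⟩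

noncomputable def Algebra.adjoinSingletonEquivQuotientKer {R A B : Type*} [CommRing R]
    [CommRing A] [CommRing B] [Algebra A B] {g : R →+* A} (hg : Function.Surjective g) (t : B) :
    Algebra.adjoin A {t} ≃+* R[X] ⧸ RingHom.ker (eval₂RingHom ((algebraMap A B).comp g) t) :=
  (RingEquiv.subringCongr (Algebra.adjoin_singleton_toSubring_eq_range_eval₂RingHom hg t)).trans
    (RingHom.quotientKerEquivRange _).symm

theorem xone_ne_zero (k : Type) [Field k] {r : ℕ} (hr : r ≠ 0) : xone k r ≠ 0 := by
  rw [xone, Ne, Ideal.Quotient.eq_zero_iff_mem, nodalRelation, Ideal.mem_span_singleton]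
  rintro ⟨g, hg⟩
  let e := Function.Embedding.subtype (fun i : Fin 3 => i = 0)
  have h0 : killCompl (R := k) e (X 0) = X ⟨0, rfl⟩ := killCompl_X (e := e) ⟨0, rfl⟩
  have hX : ∀ i ≠ 0, killCompl (R := k) e (X i) = 0 := fun i hi =>
    killCompl_X_eq_zero (by simpa [e] using hi)
  have h := congrArg (killCompl e) hg
  rw [map_mul, map_sub, map_mul, map_pow, h0, hX 1 (by decide), hX 2 (by decide), zero_pow hr,
    mul_zero, sub_zero, zero_mul] at h
  exact MvPowerSeries.X_ne_zero _ h

theorem ker_eval₂RingHom_eq_chartOneRelation (k : Type) [Field k] {r a : ℕ} (hr : r ≠ 0)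
    (har : a ≤ r) [IsDomain (Cring k r)] :
    RingHom.ker (eval₂RingHom ((algebraMap (Cring k r) (FractionRing (Cring k r))).comp
        (Ideal.Quotient.mk (nodalRelation k r)))
      (algebraMap _ (FractionRing (Cring k r)) (xthree k r) ^ a /
        algebraMap _ (FractionRing (Cring k r)) (xone k r))) = chartOneRelation k r a := by
  have hinj := IsFractionRing.injective (Cring k r) (FractionRing (Cring k r))
  have hx₁ : algebraMap _ (FractionRing (Cring k r)) (xone k r) ≠ 0 :=
    (map_ne_zero_iff _ hinj).mpr (xone_ne_zero k hr)
  -- reduction modulo `X₁`, onto `k⟦X₂,X₃⟧`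
  let π : MvPowerSeries (Fin 3) k →+* MvPowerSeries {i : Fin 3 // i ≠ 0} k :=
    (killCompl (R := k) (Function.Embedding.subtype (· ≠ 0))).toRingHom
  have hπ : ∀ i (hi : i ≠ 0), π (X i) = X ⟨i, hi⟩ := fun i hi =>
    killCompl_X (e := .subtype _) ⟨i, hi⟩
  have hsurj : Function.Surjective π := MvPowerSeries.killCompl_surjective _
  have hkerπ : RingHom.ker π = Ideal.span {X 0} := MvPowerSeries.ker_killCompl_subtype_ne 0
  have hz : Prime (π (X 2)) := by
    rw [hπ 2 (by decide)]
    exact MvPowerSeries.prime_X _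
  have hzy : ¬ π (X 2) ∣ π (X 1) := by
    rw [hπ 1 (by decide), hπ 2 (by decide)]
    exact MvPowerSeries.X_not_dvd_X (by decide)
  refine Polynomial.ker_eval₂RingHom_eq_chartIdeal (b := r - a) hsurj hkerπ hz hzy ?_ hx₁ ?_
  · rw [RingHom.ker_comp_of_injective _ hinj, Ideal.mk_ker, Nat.add_sub_cancel' har]
    rfl
  · exact mul_div_cancel₀ _ hx₁

theorem chartOne_presentation_general (k : Type) [Field k] (r a : ℕ)
    (ha1 : 1 ≤ a) (har : a ≤ r) [IsDomain (Cring k r)]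
    (t : FractionRing (Cring k r))
    (ht : t = algebraMap (Cring k r) (FractionRing (Cring k r)) (xthree k r) ^ a /
        algebraMap (Cring k r) (FractionRing (Cring k r)) (xone k r))
    (ε₁ : Polynomial (MvPowerSeries (Fin 3) k) →+* FractionRing (Cring k r))
    (hε₁ : ε₁ = Polynomial.eval₂RingHom
        ((algebraMap (Cring k r) (FractionRing (Cring k r))).comp
          (Ideal.Quotient.mk (nodalRelation k r))) t) :
    RingHom.ker ε₁ = chartOneRelation k r a ∧
      Nonempty ((Algebra.adjoin (Cring k r) ({t} : Set (FractionRing (Cring k r)))) ≃+*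
        chartOne k r a) := by
  have hker : RingHom.ker ε₁ = chartOneRelation k r a := by
    rw [hε₁, ht]
    exact ker_eval₂RingHom_eq_chartOneRelation k (by omega) har
  exact ⟨hker, ⟨(Algebra.adjoinSingletonEquivQuotientKer Ideal.Quotient.mk_surjective t).trans
    (Ideal.quotEquivOfEq (hε₁ ▸ hker))⟩⟩

/-- Presentation of the first blow-up chart (from the proof of Proposition 4.2): the `P`-algebra
homomorphism `ε₁ : P[Y] → K = Frac(C_r)` extending `P → C_r → K` and sending `Y ↦ x₃^a / x₁`
has kernel exactly `(X₁·Y − X₃^a, X₃^(r−a)·Y − X₂)`; consequently the `C_r`-subalgebra of `K`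
generated by `x₃^a / x₁` is isomorphic to `A₁(a)`. -/
theorem chartOne_presentation (k : Type) [Field k] [IsAlgClosed k] (r a : ℕ)
    (ha1 : 1 ≤ a) (har : a ≤ r) [IsDomain (Cring k r)]
    (t : FractionRing (Cring k r))
    (ht : t = algebraMap (Cring k r) (FractionRing (Cring k r)) (xthree k r) ^ a /
        algebraMap (Cring k r) (FractionRing (Cring k r)) (xone k r))
    (ε₁ : Polynomial (MvPowerSeries (Fin 3) k) →+* FractionRing (Cring k r))
    (hε₁ : ε₁ = Polynomial.eval₂RingHom
        ((algebraMap (Cring k r) (FractionRing (Cring k r))).comp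
          (Ideal.Quotient.mk (nodalRelation k r))) t) :
    RingHom.ker ε₁ = chartOneRelation k r a ∧
      Nonempty ((Algebra.adjoin (Cring k r) ({t} : Set (FractionRing (Cring k r)))) ≃+*
        chartOne k r a) :=
  chartOne_presentation_general k r a ha1 har t ht ε₁ hε₁
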